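/- A ring R is right coherent if and only if the flat-precover completing domain of every left R-module is closed under arbitrary direct products. -/

import Mathlib

open CategoryTheory

universe u

variable {R : Type u} [Ring R]

/-- The submodule of relations defining the balanced tensor product `W ⊗_R M` of a
right `R`-module `W` and a left `R`-module `M` as a quotient of `W ⊗_ℤ M`. -/
abbrev tensorRel (W : Type u) [AddCommGroup W] [Module Rᵐᵒᵖ W]
    (M : Type u) [AddCommGroup M] [Module R M] : Submodule ℤ (TensorProduct ℤ W M) :=
  Submodule.span ℤ
    {x | ∃ (w : W) (r : R) (m : M), x = (MulOpposite.op r • w) ⊗ₜ[ℤ] m - w ⊗ₜ[ℤ] (r • m)}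

/-- The balanced tensor product `W ⊗_R M` over the (possibly noncommutative) ring `R`. -/
abbrev RTensor (W : Type u) [AddCommGroup W] [Module Rᵐᵒᵖ W]
    (M : Type u) [AddCommGroup M] [Module R M] : Type u :=
  TensorProduct ℤ W M ⧸ tensorRel (R := R) W M

/-- The map `W ⊗_R M → K ⊗_R M` induced by a morphism `i : W → K` of right
`R`-modules. -/
noncomputable def tensorMap {W K : Type u} [AddCommGroup W] [Module Rᵐᵒᵖ W]
    [AddCommGroup K] [Module Rᵐᵒᵖ K] (i : W →ₗ[Rᵐᵒᵖ] K)
    (M : Type u) [AddCommGroup M] [Module R M] :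
    RTensor (R := R) W M →ₗ[ℤ] RTensor (R := R) K M :=
  Submodule.mapQ _ _ (LinearMap.rTensor M i.toAddMonoidHom.toIntLinearMap) (by
    refine Submodule.span_le.2 ?_
    rintro x ⟨w, r, m, rfl⟩
    refine Submodule.mem_comap.2 (Submodule.subset_span ?_)
    refine ⟨i w, r, m, ?_⟩
    erw [map_sub, LinearMap.rTensor_tmul, LinearMap.rTensor_tmul]
    simp [map_smul])

/-- `M` is a flat left `R`-module: tensoring with `M` preserves injectivity of
morphisms of right `R`-modules. -/
def IsFlat (M : Type u) [AddCommGroup M] [Module R M] : Prop :=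
  ∀ (W K : Type u) [AddCommGroup W] [Module Rᵐᵒᵖ W] [AddCommGroup K] [Module Rᵐᵒᵖ K]
    (i : W →ₗ[Rᵐᵒᵖ] K), Function.Injective i → Function.Injective (tensorMap (R := R) i M)

/-- `N` belongs to the flat-precover completing domain `𝔉⁻¹(M)` of `M`:
every morphism `M ⟶ N` factors through a flat module. -/
def FlatDom (M N : ModuleCat.{u} R) : Prop :=
  ∀ f : M ⟶ N, ∃ (F : ModuleCat.{u} R) (h : M ⟶ F) (k : F ⟶ N),
    IsFlat (R := R) ↥F ∧ h ≫ k = f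

/-!
If products of flat modules are flat, a morphism `M ⟶ ∏ N i` factors through the product of the
flat modules through which its components factor. Conversely, every flat `F i` lies in
`𝔉⁻¹(∏ F i)`, so closure under products makes the identity of `∏ F i` factor through a flat
module: `∏ F i` is a retract of a flat module, and retracts of flat modules are flat.
-/

noncomputable def lTensorMap {M N : Type u} [AddCommGroup M] [Module R M]
    [AddCommGroup N] [Module R N] (g : M →ₗ[R] N)
    (W : Type u) [AddCommGroup W] [Module Rᵐᵒᵖ W] :
    RTensor (R := R) W M →ₗ[ℤ] RTensor (R := R) W N :=
  Submodule.mapQ _ _ (LinearMap.lTensor W g.toAddMonoidHom.toIntLinearMap) (by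
    refine Submodule.span_le.2 ?_
    rintro x ⟨w, r, m, rfl⟩
    refine Submodule.mem_comap.2 (Submodule.subset_span ⟨w, r, g m, ?_⟩)
    erw [map_sub, LinearMap.lTensor_tmul, LinearMap.lTensor_tmul]
    simp [map_smul])

section

variable {W K M N : Type u} [AddCommGroup W] [Module Rᵐᵒᵖ W] [AddCommGroup K] [Module Rᵐᵒᵖ K]
  [AddCommGroup M] [Module R M] [AddCommGroup N] [Module R N]

lemma lTensorMap_mk_tmul (g : M →ₗ[R] N) (w : W) (m : M) :
    lTensorMap (R := R) g W (Submodule.Quotient.mk (w ⊗ₜ[ℤ] m)) =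
      Submodule.Quotient.mk (w ⊗ₜ[ℤ] g m) :=
  rfl

lemma RTensor.induction_on {motive : RTensor (R := R) W M → Prop} (x : RTensor (R := R) W M)
    (zero : motive 0) (add : ∀ x y, motive x → motive y → motive (x + y))
    (tmul : ∀ w m, motive (Submodule.Quotient.mk (w ⊗ₜ[ℤ] m))) : motive x := by
  induction x using Submodule.Quotient.induction_on with
  | _ y =>
    induction y with
    | zero => exact zero
    | add a b ha hb => exact add _ _ ha hb
    | tmul w m => exact tmul w m

lemma lTensorMap_leftInverse {h : M →ₗ[R] N} {k : N →ₗ[R] M} (hk : Function.LeftInverse k h) :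
    Function.LeftInverse (lTensorMap (R := R) k W) (lTensorMap (R := R) h W) := by
  intro x
  induction x using RTensor.induction_on with
  | zero => simp only [map_zero]
  | add a b ha hb => simp only [map_add, ha, hb]
  | tmul w m => rw [lTensorMap_mk_tmul, lTensorMap_mk_tmul, hk m]

lemma tensorMap_lTensorMap_comm (i : W →ₗ[Rᵐᵒᵖ] K) (g : M →ₗ[R] N) (x : RTensor (R := R) W M) :
    tensorMap (R := R) i N (lTensorMap (R := R) g W x) =
      lTensorMap (R := R) g K (tensorMap (R := R) i M x) := by
  induction x using RTensor.induction_on with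
  | zero => simp only [map_zero]
  | add a b ha hb => simp only [map_add, ha, hb]
  | tmul w m => rfl

lemma IsFlat.of_leftInverse {h : M →ₗ[R] N} {k : N →ₗ[R] M} (hk : Function.LeftInverse k h)
    (hN : IsFlat (R := R) N) : IsFlat (R := R) M := by
  intro W K _ _ _ _ i hi
  refine Function.Injective.of_comp (f := lTensorMap (R := R) h K) ?_
  have hcomm : lTensorMap (R := R) h K ∘ tensorMap (R := R) i M =
      tensorMap (R := R) i N ∘ lTensorMap (R := R) h W :=
    funext fun x => (tensorMap_lTensorMap_comm i h x).symm
  rw [hcomm]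
  exact (hN W K i hi).comp (lTensorMap_leftInverse hk).injective

end

lemma flatDom_of_isFlat (M : ModuleCat.{u} R) {N : ModuleCat.{u} R} (hN : IsFlat (R := R) N) :
    FlatDom M N :=
  fun f => ⟨N, f, 𝟙 N, hN, Category.comp_id f⟩

lemma isFlat_of_flatDom_self {M : ModuleCat.{u} R} (hM : FlatDom M M) : IsFlat (R := R) M := by
  obtain ⟨F, h, k, hF, hfac⟩ := hM (𝟙 M)
  exact hF.of_leftInverse (h := h.hom) (k := k.hom) fun m => congrArg (fun g => g.hom m) hfac

lemma flatDom_pi {M : ModuleCat.{u} R} {ι : Type u} {N : ι → ModuleCat.{u} R}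
    (hprod : ∀ F : ι → ModuleCat.{u} R, (∀ i, IsFlat (R := R) (F i)) →
      IsFlat (R := R) (∀ i, F i))
    (hN : ∀ i, FlatDom M (N i)) : FlatDom M (ModuleCat.of R (∀ i, N i)) := by
  intro f
  choose F h k hF hfac using fun i => hN i (f ≫ ModuleCat.ofHom (LinearMap.proj i))
  refine ⟨ModuleCat.of R (∀ i, F i), ModuleCat.ofHom (LinearMap.pi fun i => (h i).hom),
    ModuleCat.ofHom (LinearMap.pi fun i => (k i).hom.comp (LinearMap.proj i)), hprod F hF, ?_⟩
  ext m i
  exact congrArg (fun g => g.hom m) (hfac i)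

theorem stmt_15 :
    (∀ (ι : Type u) (F : ι → ModuleCat.{u} R), (∀ i, IsFlat (R := R) ↥(F i)) →
        IsFlat (R := R) (∀ i, ↥(F i))) ↔
      ∀ (M : ModuleCat.{u} R) (ι : Type u) (N : ι → ModuleCat.{u} R),
        (∀ i, FlatDom M (N i)) → FlatDom M (ModuleCat.of R (∀ i, ↥(N i))) := by
  constructor
  · exact fun hprod M ι N => flatDom_pi (hprod ι)
  · intro hdom ι F hF
    exact isFlat_of_flatDom_self (hdom _ ι F fun i => flatDom_of_isFlat _ (hF i))
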